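/- arXiv:2007.10147 — 6 statements merged into one kernel-verified Lean document; each statement's English description precedes it below -/
import Mathlib

section
/- Let (T_n) be a sequence of reals with T_n > 2 for all n, T_n strictly increasing to a limit T_∞ > 2, and let L_∞ = (-T_∞ - sqrt(T_∞²-4))/2 and L_n = (-T_n - sqrt(T_n²-4))/2. Suppose (F_n) is a sequence of negative reals satisfying F_{n+1} = -T_{n+1} - 1/F_n for all n, and F_n < L_{n+1} for all n. Then (F_n) is strictly increasing, bounded above by L_∞... in fact F_n converges to L_∞. -/
open Real Filter

theorem stmt_4 (T : ℕ → ℝ) (Tinf : ℝ) (hT2 : ∀ n, 2 < T n)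
    (hTmono : StrictMono T) (hTlim : Tendsto T atTop (nhds Tinf))
    (hTinf : 2 < Tinf)
    (Linf : ℝ) (hLinf : Linf = (-Tinf - Real.sqrt (Tinf^2 - 4)) / 2)
    (L : ℕ → ℝ) (hL : ∀ n, L n = (-T n - Real.sqrt ((T n)^2 - 4)) / 2)
    (F : ℕ → ℝ) (hFneg : ∀ n, F n < 0)
    (hFrec : ∀ n, F (n + 1) = -T (n + 1) - 1 / F n)
    (hFL : ∀ n, F n < L (n + 1)) :
    StrictMono F ∧ (∀ n, F n ≤ Linf) ∧ Tendsto F atTop (nhds Linf) := by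
  -- F is strictly increasing
  have hstep : ∀ n, F n < F (n + 1) := by
    intro n
    have hFn := hFneg n
    set s := Real.sqrt ((T (n+1))^2 - 4) with hsdef
    have hTn := hT2 (n+1)
    have hsnn : 0 ≤ s := Real.sqrt_nonneg _
    have hs2 : s ^ 2 = (T (n+1))^2 - 4 := Real.sq_sqrt (by nlinarith)
    have h1 : 0 < (-T (n+1) - s) / 2 - F n := by
      have := hFL n; rw [hL (n+1)] at this; linarith
    have h2 : 0 < (-T (n+1) + s) / 2 - F n := by linarith
    have hq : 0 < F n ^ 2 + T (n+1) * F n + 1 := by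
      nlinarith [mul_pos h1 h2]
    have hmul : F (n+1) * F n = -T (n+1) * F n - 1 := by
      rw [hFrec n]; field_simp [hFn.ne]
    nlinarith [hq, hFn, hmul]
  have hmono : StrictMono F := strictMono_nat_of_lt_succ hstep
  -- L tends to Linf
  have hgcont : Continuous fun x : ℝ => (-x - Real.sqrt (x^2 - 4)) / 2 := by
    fun_prop
  have hLlim : Tendsto L atTop (nhds Linf) := by
    have := (hgcont.tendsto Tinf).comp hTlim
    rw [hLinf]
    convert this using 1
    funext n; exact hL n
  -- F n < L m for n < m
  have hFLm : ∀ m n, n < m → F n < L m := by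
    intro m n hnm
    obtain ⟨k, rfl⟩ : ∃ k, m = k + 1 := ⟨m - 1, by omega⟩
    calc F n ≤ F k := hmono.monotone (by omega)
    _ < L (k + 1) := hFL k
  -- F n ≤ Linf
  have hFle : ∀ n, F n ≤ Linf := by
    intro n
    refine ge_of_tendsto hLlim ?_
    filter_upwards [eventually_ge_atTop (n + 1)] with m hm
    exact (hFLm m n (by omega)).le
  refine ⟨hmono, hFle, ?_⟩
  -- convergence
  have hbdd : BddAbove (Set.range F) := ⟨Linf, by rintro x ⟨n, rfl⟩; exact hFle n⟩
  set c := ⨆ n, F n with hc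
  have hFc : Tendsto F atTop (nhds c) := tendsto_atTop_ciSup hmono.monotone hbdd
  have hcle : c ≤ Linf := ciSup_le hFle
  -- Linf < 0
  set s := Real.sqrt (Tinf^2 - 4) with hsdef
  have hspos : 0 < s := Real.sqrt_pos.2 (by nlinarith)
  have hs2 : s ^ 2 = Tinf^2 - 4 := Real.sq_sqrt (by nlinarith)
  have hLneg : Linf < -1 := by rw [hLinf]; nlinarith
  have hcneg : c < 0 := by linarith
  -- pass to the limit in the recurrence
  have hT1 : Tendsto (fun n => T (n + 1)) atTop (nhds Tinf) :=
    hTlim.comp (tendsto_add_atTop_nat 1)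
  have hF1 : Tendsto (fun n => F (n + 1)) atTop (nhds c) :=
    hFc.comp (tendsto_add_atTop_nat 1)
  have hFinv : Tendsto (fun n => 1 / F n) atTop (nhds (1 / c)) := by
    simpa [one_div] using hFc.inv₀ hcneg.ne
  have hrhs : Tendsto (fun n => -T (n + 1) - 1 / F n) atTop (nhds (-Tinf - 1 / c)) :=
    hT1.neg.sub hFinv
  have hceq : c = -Tinf - 1 / c := by
    refine tendsto_nhds_unique hF1 ?_
    exact hrhs.congr fun n => (hFrec n).symm
  have hcroot : c ^ 2 + Tinf * c + 1 = 0 := by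
    have h := hceq
    field_simp [hcneg.ne] at h
    nlinarith [h]
  have hLroot : Linf ^ 2 + Tinf * Linf + 1 = 0 := by
    rw [hLinf]; nlinarith
  have hsum : 2 * Linf + Tinf = -s := by rw [hLinf]; ring
  have : c = Linf := by
    refine le_antisymm hcle ?_
    nlinarith [hcroot, hLroot, mul_nonneg (sub_nonneg.2 hcle) (by nlinarith : (0:ℝ) ≤ -(c + Linf + Tinf))]
  rwa [this] at hFc
end

section
/- Let (T_n) be a sequence of reals, strictly increasing with T_n > 2 for all n ≥ 1, converging to T_∞. Set L_n = (-T_n - sqrt(T_n²-4))/2 and U_n = (-T_n + sqrt(T_n²-4))/2, and L_∞, U_∞ the corresponding roots for T_∞. Suppose (F_n) satisfies F_{n+1} = -T_{n+1} - 1/F_n with F_n ≠ 0 for all n, and L_{n+1} < F_n < U_{n+1} for all n. Then (F_n) is strictly decreasing and converges to L_∞. -/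
open Real Filter

lemma aux_sqrt_lt (a : ℝ) (ha : 2 < a) : Real.sqrt (a^2 - 4) < a := by
  rw [Real.sqrt_lt' (by linarith)]
  linarith

lemma aux_Uneg (a : ℝ) (ha : 2 < a) : (-a + Real.sqrt (a^2 - 4)) / 2 < 0 := by
  have := aux_sqrt_lt a ha
  linarith

lemma aux_Lmono (a b : ℝ) (ha : 2 < a) (hab : a ≤ b) :
    (-b - Real.sqrt (b^2 - 4)) / 2 ≤ (-a - Real.sqrt (a^2 - 4)) / 2 := by
  have h : Real.sqrt (a^2 - 4) ≤ Real.sqrt (b^2 - 4) :=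
    Real.sqrt_le_sqrt (by nlinarith)
  linarith

lemma aux_Umono (a b : ℝ) (ha : 2 < a) (hab : a < b) :
    (-a + Real.sqrt (a^2 - 4)) / 2 < (-b + Real.sqrt (b^2 - 4)) / 2 := by
  have hs : Real.sqrt (a^2 - 4) < a := aux_sqrt_lt a ha
  have hs0 : 0 ≤ Real.sqrt (a^2 - 4) := Real.sqrt_nonneg _
  have hsq : Real.sqrt (a^2 - 4) ^ 2 = a^2 - 4 := Real.sq_sqrt (by nlinarith)
  have key : (b - a) + Real.sqrt (a^2 - 4) < Real.sqrt (b^2 - 4) := by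
    rw [Real.lt_sqrt (by linarith)]
    nlinarith [mul_pos (sub_pos.2 hab) (sub_pos.2 hs)]
  linarith

theorem stmt_5 (T : ℕ → ℝ) (Tinf : ℝ) (hT2 : ∀ n, 1 ≤ n → 2 < T n)
    (hTmono : StrictMono T) (hTlim : Tendsto T atTop (nhds Tinf))
    (hTinf : 2 < Tinf)
    (L U : ℕ → ℝ)
    (hL : ∀ n, L n = (-T n - Real.sqrt ((T n)^2 - 4)) / 2)
    (hU : ∀ n, U n = (-T n + Real.sqrt ((T n)^2 - 4)) / 2)
    (Linf Uinf : ℝ)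
    (hLinf : Linf = (-Tinf - Real.sqrt (Tinf^2 - 4)) / 2)
    (hUinf : Uinf = (-Tinf + Real.sqrt (Tinf^2 - 4)) / 2)
    (F : ℕ → ℝ) (hFne : ∀ n, F n ≠ 0)
    (hFrec : ∀ n, F (n + 1) = -T (n + 1) - 1 / F n)
    (hFbound : ∀ n, L (n + 1) < F n ∧ F n < U (n + 1)) :
    StrictAnti F ∧ Tendsto F atTop (nhds Linf) := by
  -- T n ≤ Tinf
  have hTle : ∀ n, T n ≤ Tinf := fun n => hTmono.monotone.ge_of_tendsto hTlim n
  have hTlt : ∀ n, T n < Tinf := fun n => lt_of_lt_of_le (hTmono (Nat.lt_succ_self n)) (hTle (n+1))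
  -- F n < 0
  have hFneg : ∀ n, F n < 0 := by
    intro n
    have h1 := (hFbound n).2
    rw [hU] at h1
    exact lt_trans h1 (aux_Uneg _ (hT2 (n+1) (Nat.le_add_left 1 n)))
  -- quadratic negative between roots
  have hquad : ∀ n, F n ^ 2 + T (n+1) * F n + 1 < 0 := by
    intro n
    obtain ⟨h1, h2⟩ := hFbound n
    rw [hL] at h1; rw [hU] at h2
    have hT := hT2 (n+1) (Nat.le_add_left 1 n)
    have hsq : Real.sqrt ((T (n+1))^2 - 4) ^ 2 = (T (n+1))^2 - 4 :=
      Real.sq_sqrt (by nlinarith)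
    nlinarith [mul_pos (sub_pos.2 h1) (sub_pos.2 h2)]
  -- strict anti
  have hstep : ∀ n, F (n+1) < F n := by
    intro n
    have hne := hFne n
    have hfn := hFneg n
    have e : -T (n+1) - 1 / F n = F n - (F n ^ 2 + T (n+1) * F n + 1) / F n := by
      field_simp
      ring
    have hpos : 0 < (F n ^ 2 + T (n+1) * F n + 1) / F n :=
      div_pos_of_neg_of_neg (hquad n) hfn
    rw [hFrec n, e]
    linarith
  have hanti : StrictAnti F := strictAnti_nat_of_succ_lt hstep
  -- lower bound: Linf ≤ F n
  have hLb : ∀ n, Linf ≤ F n := by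
    intro n
    have h1 := (hFbound n).1
    have h2 : Linf ≤ L (n+1) := by
      rw [hLinf, hL]
      exact aux_Lmono _ _ (hT2 (n+1) (Nat.le_add_left 1 n)) (hTle (n+1))
    linarith
  have hbdd : BddBelow (Set.range F) := ⟨Linf, by rintro x ⟨n, rfl⟩; exact hLb n⟩
  -- convergence to infimum
  set l := ⨅ n, F n with hl
  have hFlim : Tendsto F atTop (nhds l) := tendsto_atTop_ciInf hanti.antitone hbdd
  -- l < Uinf
  have hUinfneg : Uinf < 0 := by rw [hUinf]; exact aux_Uneg _ hTinf
  have hlU : l < Uinf := by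
    have h1 : l ≤ F 1 := ciInf_le hbdd 1
    have h2 : F 1 < F 0 := hstep 0
    have h3 : F 0 < U 1 := (hFbound 0).2
    have h4 : U 1 < Uinf := by
      rw [hU, hUinf]
      exact aux_Umono _ _ (hT2 1 le_rfl) (hTlt 1)
    linarith
  have hlne : l ≠ 0 := ne_of_lt (lt_trans hlU hUinfneg)
  -- limit equation
  have hlim1 : Tendsto (fun n => F (n+1)) atTop (nhds l) :=
    hFlim.comp (tendsto_add_atTop_nat 1)
  have hlim2 : Tendsto (fun n => -T (n+1) - 1 / F n) atTop (nhds (-Tinf - 1 / l)) := by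
    have hT1 : Tendsto (fun n => T (n+1)) atTop (nhds Tinf) :=
      hTlim.comp (tendsto_add_atTop_nat 1)
    exact (hT1.neg).sub ((tendsto_const_nhds).div hFlim hlne)
  have heq : l = -Tinf - 1 / l := by
    refine tendsto_nhds_unique hlim1 ?_
    have : (fun n => F (n+1)) = (fun n => -T (n+1) - 1 / F n) := funext hFrec
    rw [this]; exact hlim2
  have hquadl : l ^ 2 + Tinf * l + 1 = 0 := by
    have : l * l = (-Tinf - 1 / l) * l := by rw [← heq]
    field_simp at this
    nlinarith [this]
  have hsqi : Real.sqrt (Tinf^2 - 4) ^ 2 = Tinf^2 - 4 := Real.sq_sqrt (by nlinarith)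
  have hfac : (l - Linf) * (l - Uinf) = 0 := by
    rw [hLinf, hUinf]
    linear_combination hquadl - (1/4) * hsqi
  have : l = Linf := by
    rcases mul_eq_zero.1 hfac with h | h
    · linarith
    · exfalso; linarith
  rw [← this]
  exact ⟨hanti, hFlim⟩
end

section
/- Let 0 < r₁ < r₂ be fixed. For t ∈ (0, r₂ - r₁) write ε = r₂ - r₁ - t and α(t) = sqrt((r₂+r₁)² - t²)·sqrt((r₂-r₁)² - t²)/(2t). Then as ε → 0⁺, α(t) = r_*·sqrt(ε) + O(ε^{3/2}), where r_* = sqrt(2·r₁·r₂/(r₂ - r₁)). In particular, lim_{ε→0⁺} α(t)/sqrt(ε) = r_*. -/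
open Real Filter

theorem stmt_11 (r₁ r₂ : ℝ) (h1 : 0 < r₁) (h12 : r₁ < r₂)
    (α : ℝ → ℝ)
    (hα : ∀ t, α t = Real.sqrt ((r₂ + r₁)^2 - t^2) * Real.sqrt ((r₂ - r₁)^2 - t^2) / (2 * t))
    (rstar : ℝ) (hrstar : rstar = Real.sqrt (2 * r₁ * r₂ / (r₂ - r₁))) :
    (∃ C > 0, ∃ δ > 0, ∀ ε : ℝ, 0 < ε → ε < δ →
        |α (r₂ - r₁ - ε) - rstar * Real.sqrt ε| ≤ C * (ε * Real.sqrt ε)) ∧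
    Tendsto (fun ε : ℝ => α (r₂ - r₁ - ε) / Real.sqrt ε)
      (nhdsWithin 0 (Set.Ioi 0)) (nhds rstar) := by
  have hd0 : 0 < r₂ - r₁ := sub_pos.mpr h12
  set d : ℝ := r₂ - r₁ with hd
  have hdne : d ≠ 0 := ne_of_gt hd0
  set g : ℝ → ℝ := fun ε =>
      Real.sqrt ((r₂ + r₁)^2 - (d - ε)^2) * Real.sqrt (2*d - ε) / (2 * (d - ε)) with hg
  -- factorization
  have hfac : ∀ ε : ℝ, 0 ≤ ε → α (d - ε) = Real.sqrt ε * g ε := by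
    intro ε hε
    rw [hα, hg]
    have h1' : (r₂ - r₁)^2 - (d - ε)^2 = ε * (2*d - ε) := by rw [← hd]; ring
    rw [h1', Real.sqrt_mul hε]
    ring
  -- differentiability of g at 0
  have hA : (r₂ + r₁)^2 - (d - 0)^2 ≠ 0 := by
    rw [hd]; nlinarith
  have hB : 2*d - 0 ≠ 0 := by rw [hd]; nlinarith
  have hC : 2 * (d - 0) ≠ 0 := by rw [hd]; nlinarith
  have hgd : DifferentiableAt ℝ g 0 := by
    have hf1 : DifferentiableAt ℝ (fun ε : ℝ => (r₂ + r₁)^2 - (d - ε)^2) 0 := by fun_prop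
    have hf2 : DifferentiableAt ℝ (fun ε : ℝ => 2*d - ε) 0 := by fun_prop
    have hf3 : DifferentiableAt ℝ (fun ε : ℝ => 2 * (d - ε)) 0 := by fun_prop
    exact DifferentiableAt.div ((hf1.sqrt hA).mul (hf2.sqrt hB)) hf3 hC
  -- g 0 = rstar
  have hg0 : g 0 = rstar := by
    rw [hg, hrstar]
    simp only [sub_zero]
    have key : (r₂ + r₁)^2 - d^2 = 4*(r₁*r₂) := by rw [hd]; ring
    have h2d : (0:ℝ) < 2*d := by linarith
    have hr2 : 0 < r₂ := h1.trans h12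
    have hnum : Real.sqrt ((r₂ + r₁)^2 - d^2) * Real.sqrt (2*d) =
        Real.sqrt (4*(r₁*r₂)*(2*d)) := by
      rw [key]
      exact (Real.sqrt_mul (by nlinarith : (0:ℝ) ≤ 4*(r₁*r₂)) (2*d)).symm
    rw [hnum]
    have harg : 2*r₁*r₂/d = (4*(r₁*r₂)*(2*d)) / (2*d)^2 := by
      field_simp; ring
    rw [harg, Real.sqrt_div (by nlinarith [mul_pos (mul_pos h1 hr2) h2d] : (0:ℝ) ≤ 4*(r₁*r₂)*(2*d)), Real.sqrt_sq h2d.le]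
  constructor
  · -- big-O part
    have hder := (hgd.hasDerivAt).isLittleO
    have hbound := hder.bound (c := 1) one_pos
    rw [Metric.eventually_nhds_iff] at hbound
    obtain ⟨δ, hδ0, hδ⟩ := hbound
    refine ⟨|deriv g 0| + 1, by positivity, δ, hδ0, ?_⟩
    intro ε hε hεδ
    have hdist : dist ε (0:ℝ) < δ := by
      simp [abs_of_pos hε, hεδ]
    have key := hδ hdist
    simp only [sub_zero, ContinuousLinearMap.smulRight_apply, ContinuousLinearMap.one_apply,
      smul_eq_mul, Real.norm_eq_abs, one_mul, abs_of_pos hε] at key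
    have hgb : |g ε - rstar| ≤ (|deriv g 0| + 1) * ε := by
      rw [← hg0]
      have h1'' : |g ε - g 0| ≤ |g ε - g 0 - ε * deriv g 0| + |ε * deriv g 0| := by
        calc |g ε - g 0| = |(g ε - g 0 - ε * deriv g 0) + ε * deriv g 0| := by ring_nf
          _ ≤ _ := abs_add_le _ _
      have h2'' : |ε * deriv g 0| = ε * |deriv g 0| := by
        rw [abs_mul, abs_of_pos hε]
      nlinarith [abs_nonneg (deriv g 0), key]
    rw [hfac ε hε.le]
    have hs : (0:ℝ) ≤ Real.sqrt ε := Real.sqrt_nonneg ε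
    have heq : Real.sqrt ε * g ε - rstar * Real.sqrt ε = Real.sqrt ε * (g ε - rstar) := by ring
    rw [heq, abs_mul, abs_of_nonneg hs]
    calc Real.sqrt ε * |g ε - rstar| ≤ Real.sqrt ε * ((|deriv g 0| + 1) * ε) :=
          mul_le_mul_of_nonneg_left hgb hs
      _ = (|deriv g 0| + 1) * (ε * Real.sqrt ε) := by ring
  · -- limit part
    have hcont : Tendsto g (nhdsWithin 0 (Set.Ioi 0)) (nhds rstar) := by
      rw [← hg0]
      exact (hgd.continuousAt.tendsto).mono_left nhdsWithin_le_nhds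
    apply hcont.congr'
    filter_upwards [self_mem_nhdsWithin] with ε (hε : 0 < ε)
    rw [hfac ε hε.le, mul_comm, mul_div_assoc,
      div_self (ne_of_gt (Real.sqrt_pos.mpr hε)), mul_one]
end

section
/- Let 0 < r₁ < r₂, write ε = r₂ - r₁ - t with t ∈ (0, r₂-r₁), α = sqrt((r₂+r₁)² - t²)·sqrt((r₂-r₁)² - t²)/(2t), and ξ_j = arcsinh(α/r_j) for j = 1, 2. Then as ε → 0⁺, ξ_j = (r_*/r_j)·sqrt(ε) + O(ε^{3/2}) with r_* = sqrt(2 r₁ r₂/(r₂ - r₁)); in particular lim_{ε→0⁺} ξ_j/sqrt(ε) = r_*/r_j. -/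
open Real Filter

lemma arsinh_est (x : ℝ) (hx : 0 ≤ x) : |Real.arsinh x - x| ≤ x^3 / 2 := by
  have key : ∀ y ∈ Set.Icc (0:ℝ) x, HasDerivWithinAt (fun t => Real.arsinh t - t)
      ((Real.sqrt (1 + y^2))⁻¹ - 1) (Set.Icc 0 x) y := fun y _ =>
    ((Real.hasDerivAt_arsinh y).sub (hasDerivAt_id y)).hasDerivWithinAt
  have bound : ∀ y ∈ Set.Icc (0:ℝ) x, ‖(Real.sqrt (1 + y^2))⁻¹ - 1‖ ≤ x^2 / 2 := by
    intro y hy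
    obtain ⟨hy0, hyx⟩ := hy
    have h1 : 1 ≤ Real.sqrt (1 + y^2) := by
      have := Real.sqrt_le_sqrt (show (1:ℝ) ≤ 1 + y^2 by nlinarith)
      simpa using this
    have h2 : Real.sqrt (1 + y^2) ≤ 1 + y^2/2 := by
      rw [show (1 + y^2/2 : ℝ) = Real.sqrt ((1 + y^2/2)^2) by
        rw [Real.sqrt_sq (by positivity)]]
      exact Real.sqrt_le_sqrt (by nlinarith)
    have hs0 : 0 < Real.sqrt (1 + y^2) := by linarith
    have hinv : (Real.sqrt (1 + y^2))⁻¹ ≤ 1 := by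
      rw [inv_le_one_iff₀]; right; exact h1
    have hinv2 : 1 - (Real.sqrt (1 + y^2))⁻¹ ≤ y^2/2 := by
      have : (Real.sqrt (1 + y^2))⁻¹ * Real.sqrt (1 + y^2) = 1 := inv_mul_cancel₀ (ne_of_gt hs0)
      nlinarith
    rw [Real.norm_eq_abs, abs_sub_comm, abs_of_nonneg (by linarith)]
    nlinarith
  have := Convex.norm_image_sub_le_of_norm_hasDerivWithin_le key bound (convex_Icc 0 x)
    (Set.left_mem_Icc.mpr hx) (Set.right_mem_Icc.mpr hx)
  simp only [Real.arsinh_zero, Real.norm_eq_abs, sub_zero] at this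
  calc |Real.arsinh x - x| ≤ x^2/2 * |x| := this
    _ = x^3/2 := by rw [abs_of_nonneg hx]; ring

lemma sqrt_diff (a b : ℝ) (ha : 0 ≤ a) (hb : 0 < b) :
    |Real.sqrt a - Real.sqrt b| * Real.sqrt b ≤ |a - b| := by
  have hsa := Real.sqrt_nonneg a
  have hsb : 0 < Real.sqrt b := Real.sqrt_pos.mpr hb
  have h1 : (Real.sqrt a - Real.sqrt b) * (Real.sqrt a + Real.sqrt b) = a - b := by
    have h2 := Real.sq_sqrt ha
    have h3 := Real.sq_sqrt hb.le
    nlinarith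
  calc |Real.sqrt a - Real.sqrt b| * Real.sqrt b
      ≤ |Real.sqrt a - Real.sqrt b| * (Real.sqrt a + Real.sqrt b) := by
        apply mul_le_mul_of_nonneg_left (by linarith) (abs_nonneg _)
    _ = |a - b| := by
        rw [← abs_of_nonneg (by linarith : (0:ℝ) ≤ Real.sqrt a + Real.sqrt b), ← abs_mul, h1]

set_option maxHeartbeats 2000000 in
theorem stmt_12 (r₁ r₂ : ℝ) (h1 : 0 < r₁) (h12 : r₁ < r₂)
    (α : ℝ → ℝ)
    (hα : ∀ t, α t = Real.sqrt ((r₂ + r₁)^2 - t^2) * Real.sqrt ((r₂ - r₁)^2 - t^2) / (2 * t))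
    (ξ : ℝ → ℝ → ℝ)
    (hξ : ∀ r t, ξ r t = Real.arsinh (α t / r))
    (rstar : ℝ) (hrstar : rstar = Real.sqrt (2 * r₁ * r₂ / (r₂ - r₁))) :
    ∀ r : ℝ, (r = r₁ ∨ r = r₂) →
      (∃ C > 0, ∃ δ > 0, ∀ ε : ℝ, 0 < ε → ε < δ →
          |ξ r (r₂ - r₁ - ε) - (rstar / r) * Real.sqrt ε| ≤ C * (ε * Real.sqrt ε)) ∧
      Tendsto (fun ε : ℝ => ξ r (r₂ - r₁ - ε) / Real.sqrt ε)
        (nhdsWithin 0 (Set.Ioi 0)) (nhds (rstar / r)) := by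
  intro r hr
  have hd : 0 < r₂ - r₁ := sub_pos.mpr h12
  set d : ℝ := r₂ - r₁ with hd_def
  have hr2 : 0 < r₂ := lt_trans h1 h12
  have hr0 : 0 < r := by rcases hr with h | h <;> subst h <;> linarith
  set A : ℝ → ℝ := fun ε => (2*r₁+ε)*(2*r₂-ε)*(2*d-ε) with hA_def
  set h : ℝ → ℝ := fun ε => Real.sqrt (A ε) / (2*(d-ε)*r) with hh_def
  -- key identity
  have key : ∀ ε : ℝ, 0 < ε → ε < d →
      ξ r (d - ε) = Real.arsinh (Real.sqrt ε * h ε) := by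
    intro ε hε hεd
    rw [hξ, hα]
    congr 1
    have e1 : (r₂ + r₁)^2 - (d - ε)^2 = (2*r₁+ε)*(2*r₂-ε) := by rw [hd_def]; ring
    have e2 : d^2 - (d - ε)^2 = ε*(2*d-ε) := by ring
    rw [e1, e2, Real.sqrt_mul hε.le]
    have e3 : Real.sqrt ((2*r₁+ε)*(2*r₂-ε)) * Real.sqrt (2*d-ε)
        = Real.sqrt (A ε) := by
      rw [hA_def, ← Real.sqrt_mul (by nlinarith)]
    rw [show Real.sqrt ((2*r₁+ε)*(2*r₂-ε)) * (Real.sqrt ε * Real.sqrt (2*d-ε))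
        = Real.sqrt ε * (Real.sqrt ((2*r₁+ε)*(2*r₂-ε)) * Real.sqrt (2*d-ε)) by ring,
      e3, hh_def, div_div, mul_div_assoc]
  -- constants
  have h8 : (0:ℝ) < 8*r₁*r₂*d := by
    have := mul_pos (mul_pos (mul_pos (by norm_num : (0:ℝ) < 8) h1) hr2) hd
    linarith
  set S0 : ℝ := Real.sqrt (8*r₁*r₂*d) with hS0_def
  have hS0 : 0 < S0 := Real.sqrt_pos.mpr h8
  have hstar : rstar / r = S0 / (2*d*r) := by
    rw [hrstar, hS0_def, show 2*r₁*r₂/d = (8*r₁*r₂*d)/(2*d)^2 by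
        field_simp [ne_of_gt hd]; ring,
      Real.sqrt_div h8.le, Real.sqrt_sq (by linarith), div_div]
  set K : ℝ := 4*d^2 + 4*r₁*r₂ + 4*d + 1 with hK_def
  have hK : 0 < K := by nlinarith
  set L : ℝ := (d*K/S0 + S0)/(d^2*r) with hL_def
  set M : ℝ := Real.sqrt ((2*r₁+1)*(2*r₂)*(2*d)) / (d*r) with hM_def
  have hdr : (0:ℝ) < d*r := mul_pos hd hr0
  have hd2r : (0:ℝ) < d^2*r := by nlinarith
  have hMnn : 0 ≤ M := div_nonneg (Real.sqrt_nonneg _) hdr.le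
  have hLnn : 0 ≤ L := div_nonneg
    (add_nonneg (div_nonneg (by nlinarith) hS0.le) hS0.le) hd2r.le
  set C : ℝ := M^3/2 + L + 1 with hC_def
  have hC : 0 < C := by
    have : 0 ≤ M^3 := pow_nonneg hMnn 3
    rw [hC_def]; linarith
  set δ : ℝ := min (d/2) 1 with hδ_def
  have hδ : 0 < δ := lt_min (by linarith) one_pos
  -- pointwise estimate
  have part1 : ∀ ε : ℝ, 0 < ε → ε < δ →
      |ξ r (d - ε) - (rstar/r) * Real.sqrt ε| ≤ C * (ε * Real.sqrt ε) := by
    intro ε hε hεδ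
    have hε2 : ε < d/2 := lt_of_lt_of_le hεδ (min_le_left _ _)
    have hε1 : ε < 1 := lt_of_lt_of_le hεδ (min_le_right _ _)
    have hεd : ε < d := by linarith
    have hse : 0 ≤ Real.sqrt ε := Real.sqrt_nonneg ε
    have hse2 : Real.sqrt ε ^ 2 = ε := Real.sq_sqrt hε.le
    have hp1 : (0:ℝ) < 2*r₁+ε := by linarith
    have hp2 : (0:ℝ) < 2*r₂-ε := by linarith
    have hp3 : (0:ℝ) < 2*d-ε := by linarith
    have hAnn : 0 ≤ A ε := by
      simp only [hA_def]
      exact le_of_lt (mul_pos (mul_pos hp1 hp2) hp3)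
    have hden : (0:ℝ) < 2*(d-ε)*r := by nlinarith
    have hhnn : 0 ≤ h ε := by
      simp only [hh_def]; exact div_nonneg (Real.sqrt_nonneg _) hden.le
    -- bound h ε ≤ M
    have hM : h ε ≤ M := by
      simp only [hh_def, hM_def]
      have hAle : A ε ≤ (2*r₁+1)*(2*r₂)*(2*d) := by
        simp only [hA_def]
        have s1 : (2*r₁+ε)*(2*r₂-ε) ≤ (2*r₁+1)*(2*r₂) :=
          mul_le_mul (by linarith) (by linarith) hp2.le (by linarith)
        exact mul_le_mul s1 (by linarith) hp3.le
          (le_of_lt (mul_pos (by linarith) (by linarith)))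
      have hnum0 : Real.sqrt (A ε) ≤ Real.sqrt ((2*r₁+1)*(2*r₂)*(2*d)) :=
        Real.sqrt_le_sqrt hAle
      have hden0 : d*r ≤ 2*(d-ε)*r := by nlinarith
      exact div_le_div₀ (Real.sqrt_nonneg _) hnum0 hdr hden0
    -- Lipschitz bound
    have hLip : |h ε - rstar/r| ≤ L * ε := by
      rw [hstar]
      have hden2 : (0:ℝ) < 2*d*r := by nlinarith
      have hddr : (0:ℝ) < 2*(d-ε)*d*r := by nlinarith
      have hsplit : h ε - S0/(2*d*r)
          = (d*(Real.sqrt (A ε) - S0) + ε*S0) / (2*(d-ε)*d*r) := by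
        simp only [hh_def]
        rw [div_sub_div _ _ (ne_of_gt hden) (ne_of_gt hden2),
          div_eq_div_iff (by nlinarith : (2*(d-ε)*r)*(2*d*r) ≠ 0) (ne_of_gt hddr)]
        ring
      rw [hsplit]
      have hAdiff : |A ε - 8*r₁*r₂*d| ≤ K * ε := by
        rw [abs_le]
        constructor <;> simp only [hA_def, hK_def] <;>
          nlinarith [mul_nonneg hε.le (sub_nonneg.mpr hε1.le),
            mul_nonneg (mul_nonneg hε.le hε.le) (sub_nonneg.mpr hε1.le),
            mul_nonneg (mul_nonneg hd.le hε.le) (sub_nonneg.mpr hε1.le),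
            mul_pos h1 hr2, mul_nonneg hε.le hε.le]
      have hsd : |Real.sqrt (A ε) - S0| ≤ K * ε / S0 := by
        rw [le_div_iff₀ hS0]
        calc |Real.sqrt (A ε) - S0| * S0 ≤ |A ε - 8*r₁*r₂*d| := by
              rw [hS0_def]; exact sqrt_diff _ _ hAnn h8
          _ ≤ K * ε := hAdiff
      have hnum : |d*(Real.sqrt (A ε) - S0) + ε*S0| ≤ (d*K/S0 + S0) * ε := by
        calc |d*(Real.sqrt (A ε) - S0) + ε*S0|
            ≤ |d*(Real.sqrt (A ε) - S0)| + |ε*S0| := abs_add_le _ _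
          _ = d * |Real.sqrt (A ε) - S0| + ε*S0 := by
              rw [abs_mul, abs_mul, abs_of_nonneg hd.le, abs_of_pos hε, abs_of_pos hS0]
          _ ≤ d * (K*ε/S0) + ε*S0 := by
              have := mul_le_mul_of_nonneg_left hsd hd.le
              linarith
          _ = (d*K/S0 + S0) * ε := by field_simp
      have hNnn : (0:ℝ) ≤ d*K/S0 + S0 :=
        add_nonneg (div_nonneg (mul_nonneg hd.le hK.le) hS0.le) hS0.le
      rw [abs_div, abs_of_pos hddr, div_le_iff₀ hddr]
      calc |d*(Real.sqrt (A ε) - S0) + ε*S0| ≤ (d*K/S0 + S0) * ε := hnum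
        _ ≤ (d*K/S0 + S0) * ε * ((2*(d-ε)*d*r) / (d^2*r)) := by
            apply le_mul_of_one_le_right (mul_nonneg hNnn hε.le)
            rw [le_div_iff₀ hd2r]
            nlinarith
        _ = L * ε * (2*(d-ε)*d*r) := by rw [hL_def]; ring
    -- combine
    rw [key ε hε hεd]
    have hx : 0 ≤ Real.sqrt ε * h ε := mul_nonneg hse hhnn
    have harc := arsinh_est _ hx
    have hεse : 0 ≤ ε * Real.sqrt ε := mul_nonneg hε.le hse
    calc |Real.arsinh (Real.sqrt ε * h ε) - rstar/r * Real.sqrt ε|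
        ≤ |Real.arsinh (Real.sqrt ε * h ε) - Real.sqrt ε * h ε|
          + |Real.sqrt ε * h ε - rstar/r * Real.sqrt ε| := abs_sub_le _ _ _
      _ ≤ (Real.sqrt ε * h ε)^3/2 + Real.sqrt ε * (L * ε) := by
          apply add_le_add harc
          rw [show Real.sqrt ε * h ε - rstar/r * Real.sqrt ε
              = Real.sqrt ε * (h ε - rstar/r) by ring, abs_mul, abs_of_nonneg hse]
          exact mul_le_mul_of_nonneg_left hLip hse
      _ ≤ (ε * Real.sqrt ε) * M^3/2 + L * (ε * Real.sqrt ε) := by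
          have h3 : (Real.sqrt ε * h ε)^3 ≤ (ε * Real.sqrt ε) * M^3 := by
            have e : (Real.sqrt ε * h ε)^3 = Real.sqrt ε^2 * Real.sqrt ε * (h ε)^3 := by ring
            rw [e, hse2]
            have hp : (h ε)^3 ≤ M^3 := pow_le_pow_left₀ hhnn hM 3
            nlinarith
          have h4 : Real.sqrt ε * (L*ε) = L * (ε * Real.sqrt ε) := by ring
          rw [h4]
          linarith
      _ ≤ C * (ε * Real.sqrt ε) := by
          rw [hC_def]
          nlinarith
  refine ⟨⟨C, hC, δ, hδ, part1⟩, ?_⟩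
  -- the limit
  have hb : ∀ᶠ ε in nhdsWithin (0:ℝ) (Set.Ioi 0),
      ‖ξ r (d - ε) / Real.sqrt ε - rstar/r‖ ≤ C * ε := by
    filter_upwards [Ioo_mem_nhdsGT_of_mem (Set.mem_Ico.mpr ⟨le_refl (0:ℝ), hδ⟩)] with ε hε
    obtain ⟨hε0, hεδ⟩ := hε
    have hs : 0 < Real.sqrt ε := Real.sqrt_pos.mpr hε0
    have hp := part1 ε hε0 hεδ
    rw [Real.norm_eq_abs, show ξ r (d-ε)/Real.sqrt ε - rstar/r
        = (ξ r (d-ε) - rstar/r * Real.sqrt ε)/Real.sqrt ε by field_simp,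
      abs_div, abs_of_pos hs, div_le_iff₀ hs]
    calc |ξ r (d-ε) - rstar/r * Real.sqrt ε| ≤ C * (ε * Real.sqrt ε) := hp
      _ = C * ε * Real.sqrt ε := by ring
  have h0 : Tendsto (fun ε : ℝ => C * ε) (nhdsWithin 0 (Set.Ioi 0)) (nhds 0) := by
    have : Tendsto (fun ε : ℝ => C * ε) (nhds 0) (nhds (C * 0)) :=
      (continuous_const.mul continuous_id).tendsto 0
    simpa using this.mono_left nhdsWithin_le_nhds
  have := (squeeze_zero_norm' hb h0).add_const (rstar/r)
  simpa using this
end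

section
/- Let 0 < r₁ < r₂ and 0 ≤ t < r₂ - r₁, and let Ω = B(0, r₂) \ closure(B(t·e₁, r₁)) ⊂ ℝ². For v(x) = |x - t·e₁| - r₁ one has ∫_Ω |∇v|² dx = π(r₂² − r₁²). Consequently, the Rayleigh quotient ∫_Ω|∇v|²dx / ∫_{∂B(0,r₂)} v² dS equals π(r₂² − r₁²) / (2π r₂(r₂²+r₁²+t²) − 4 r₁ r₂ ∫₀^π sqrt(r₂² − 2 r₂ t cos φ + t²) dφ). -/
open Real

open MeasureTheory in
lemma grad_aux_stmt14 (c x : EuclideanSpace ℝ (Fin 2)) (r : ℝ) (hx : x ≠ c) :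
    HasGradientAt (fun y => ‖y - c‖ - r) (‖x - c‖⁻¹ • (x - c)) x := by
  have hu : x - c ≠ 0 := sub_ne_zero.mpr hx
  have hn : ‖x - c‖ ≠ 0 := norm_ne_zero_iff.mpr hu
  have h1 : HasFDerivAt (fun y : EuclideanSpace ℝ (Fin 2) => ‖y - c‖ ^ 2)
      (2 • (innerSL ℝ (x - c)).comp (ContinuousLinearMap.id ℝ _)) x :=
    ((hasFDerivAt_id x).sub_const c).norm_sq
  have h2 := (h1.sqrt (pow_ne_zero 2 hn)).sub_const r
  rw [hasGradientAt_iff_hasFDerivAt]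
  have heq : (fun y : EuclideanSpace ℝ (Fin 2) => ‖y - c‖ - r)
      = fun y => Real.sqrt (‖y - c‖ ^ 2) - r := by
    funext y; rw [Real.sqrt_sq (norm_nonneg _)]
  rw [heq]
  refine h2.congr_fderiv ?_
  ext y
  simp [Real.sqrt_sq (norm_nonneg (x - c)), real_inner_smul_left, two_smul]
  field_simp
  ring

theorem stmt_14 (r₁ r₂ t : ℝ) (h1 : 0 < r₁) (h12 : r₁ < r₂)
    (ht0 : 0 ≤ t) (ht : t < r₂ - r₁)
    (e₁ : EuclideanSpace ℝ (Fin 2)) (he₁ : e₁ = EuclideanSpace.single 0 1)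
    (v : EuclideanSpace ℝ (Fin 2) → ℝ) (hv : ∀ x, v x = ‖x - t • e₁‖ - r₁)
    (Ω : Set (EuclideanSpace ℝ (Fin 2)))
    (hΩ : Ω = Metric.ball 0 r₂ \ closure (Metric.ball (t • e₁) r₁)) :
    (∫ x in Ω, ‖gradient v x‖^2) = π * (r₂^2 - r₁^2) ∧
    (∫ x in Ω, ‖gradient v x‖^2) /
        (∫ φ in (-π)..π, (Real.sqrt (r₂^2 - 2 * r₂ * t * Real.cos φ + t^2) - r₁)^2 * r₂)
      = π * (r₂^2 - r₁^2) /
        (2 * π * r₂ * (r₂^2 + r₁^2 + t^2)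
          - 4 * r₁ * r₂ * ∫ φ in (0:ℝ)..π,
              Real.sqrt (r₂^2 - 2 * r₂ * t * Real.cos φ + t^2)) := by
  classical
  have hr2 : 0 < r₂ := h1.trans h12
  -- Part 1: the Dirichlet energy.
  have key1 : (∫ x in Ω, ‖gradient v x‖^2) = π * (r₂^2 - r₁^2) := by
    have hv' : v = fun y => ‖y - t • e₁‖ - r₁ := funext hv
    have hmeas : MeasurableSet Ω := by
      rw [hΩ]; exact measurableSet_ball.diff isClosed_closure.measurableSet
    have hcenter : t • e₁ ∈ closure (Metric.ball (t • e₁) r₁) :=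
      subset_closure (Metric.mem_ball_self h1)
    have hgrad : ∀ x ∈ Ω, ‖gradient v x‖^2 = (1 : ℝ) := by
      intro x hx
      have hxne : x ≠ t • e₁ := by
        intro hcontra
        rw [hΩ] at hx
        exact hx.2 (hcontra ▸ hcenter)
      have hg : gradient v x = ‖x - t • e₁‖⁻¹ • (x - t • e₁) := by
        rw [hv']
        exact (grad_aux_stmt14 (t • e₁) x r₁ hxne).gradient
      have hn : ‖x - t • e₁‖ ≠ 0 := norm_ne_zero_iff.mpr (sub_ne_zero.mpr hxne)
      rw [hg, norm_smul, norm_inv, norm_norm, inv_mul_cancel₀ hn]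
      norm_num
    rw [MeasureTheory.setIntegral_congr_fun hmeas hgrad,
      MeasureTheory.setIntegral_const, smul_eq_mul, mul_one]
    -- volume computation
    have hne : ‖e₁‖ = 1 := by rw [he₁, EuclideanSpace.norm_single]; norm_num
    have hcl : closure (Metric.ball (t • e₁) r₁) = Metric.closedBall (t • e₁) r₁ :=
      closure_ball _ h1.ne'
    have hsub : Metric.closedBall (t • e₁) r₁ ⊆ Metric.ball (0 : EuclideanSpace ℝ (Fin 2)) r₂ := by
      intro y hy
      rw [Metric.mem_closedBall] at hy
      rw [Metric.mem_ball]
      calc dist y 0 ≤ dist y (t • e₁) + dist (t • e₁) 0 := dist_triangle _ _ _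
        _ ≤ r₁ + t := by
            rw [dist_zero_right, norm_smul, hne, mul_one, Real.norm_eq_abs, abs_of_nonneg ht0]
            linarith
        _ < r₂ := by linarith
    have hfin : MeasureTheory.volume (Metric.closedBall (t • e₁) r₁) ≠ ⊤ := by
      rw [EuclideanSpace.volume_closedBall]
      exact ENNReal.mul_ne_top (by simp) (by simp)
    rw [hΩ, hcl, MeasureTheory.measureReal_def, MeasureTheory.measure_diff hsub
      measurableSet_closedBall.nullMeasurableSet hfin]
    rw [EuclideanSpace.volume_closedBall, EuclideanSpace.volume_ball]
    have hC : Real.sqrt π ^ Fintype.card (Fin 2)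
        / Real.Gamma (Fintype.card (Fin 2) / 2 + 1) = π := by
      simp only [Fintype.card_fin]
      rw [Real.sq_sqrt pi_nonneg]
      norm_num [Real.Gamma_two]
    rw [hC]
    simp only [Fintype.card_fin]
    rw [← ENNReal.ofReal_pow hr2.le, ← ENNReal.ofReal_pow h1.le,
      ← ENNReal.ofReal_mul (by positivity), ← ENNReal.ofReal_mul (by positivity),
      ← ENNReal.ofReal_sub _ (by positivity)]
    have hpos : (0:ℝ) ≤ r₂ ^ 2 * π - r₁ ^ 2 * π := by
      nlinarith [pi_pos, mul_pos (show (0:ℝ) < r₂ - r₁ by linarith)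
        (show (0:ℝ) < r₂ + r₁ by linarith)]
    rw [ENNReal.toReal_ofReal hpos]
    ring
  -- Part 2: the denominator identity.
  have key2 : (∫ φ in (-π)..π, (Real.sqrt (r₂^2 - 2 * r₂ * t * Real.cos φ + t^2) - r₁)^2 * r₂)
      = 2 * π * r₂ * (r₂^2 + r₁^2 + t^2)
          - 4 * r₁ * r₂ * ∫ φ in (0:ℝ)..π,
              Real.sqrt (r₂^2 - 2 * r₂ * t * Real.cos φ + t^2) := by
    set s : ℝ → ℝ := fun φ => Real.sqrt (r₂^2 - 2 * r₂ * t * Real.cos φ + t^2) with hs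
    have hnn : ∀ φ, 0 ≤ r₂^2 - 2 * r₂ * t * Real.cos φ + t^2 := by
      intro φ
      nlinarith [Real.cos_le_one φ, sq_nonneg (r₂ - t),
        mul_le_mul_of_nonneg_left (Real.cos_le_one φ) (by positivity : (0:ℝ) ≤ 2 * r₂ * t)]
    have hscont : Continuous s := by
      apply Real.continuous_sqrt.comp; continuity
    have hsint : ∀ a b : ℝ, IntervalIntegrable s MeasureTheory.volume a b := fun a b =>
      hscont.intervalIntegrable a b
    have hsym : ∫ φ in (-π)..(0:ℝ), s φ = ∫ φ in (0:ℝ)..π, s φ := by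
      have h1' : ∫ x in (0:ℝ)..π, s (-x) = ∫ x in (-π)..(-(0:ℝ)), s x :=
        intervalIntegral.integral_comp_neg s
      have h2' : (fun x => s (-x)) = s := by funext x; simp [hs, Real.cos_neg]
      rw [h2'] at h1'
      rw [neg_zero] at h1'
      exact h1'.symm
    have hsplit : ∫ φ in (-π)..π, s φ = 2 * ∫ φ in (0:ℝ)..π, s φ := by
      rw [← intervalIntegral.integral_add_adjacent_intervals (hsint (-π) 0) (hsint 0 π), hsym]
      ring
    have hpt : ∀ φ, (s φ - r₁)^2 * r₂
        = (r₂^3 + r₂ * t^2 + r₁^2 * r₂) + (-(2 * r₂^2 * t)) * Real.cos φ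
          + (-(2 * r₁ * r₂)) * s φ := by
      intro φ
      have h := Real.sq_sqrt (hnn φ)
      rw [hs]
      linear_combination r₂ * h
    rw [intervalIntegral.integral_congr (fun φ _ => hpt φ)]
    have hint1 : IntervalIntegrable (fun _ : ℝ => (r₂^3 + r₂ * t^2 + r₁^2 * r₂))
        MeasureTheory.volume (-π) π := intervalIntegrable_const
    have hint2 : IntervalIntegrable (fun φ : ℝ => (-(2 * r₂^2 * t)) * Real.cos φ)
        MeasureTheory.volume (-π) π :=
      (continuous_const.mul Real.continuous_cos).intervalIntegrable _ _
    have hint3 : IntervalIntegrable (fun φ : ℝ => (-(2 * r₁ * r₂)) * s φ)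
        MeasureTheory.volume (-π) π :=
      (continuous_const.mul hscont).intervalIntegrable _ _
    rw [intervalIntegral.integral_add (hint1.add hint2) hint3,
      intervalIntegral.integral_add hint1 hint2,
      intervalIntegral.integral_const,
      intervalIntegral.integral_const_mul, intervalIntegral.integral_const_mul,
      integral_cos, hsplit]
    simp [Real.sin_pi]
    ring
  exact ⟨key1, by rw [key1, key2]⟩
end

section
/- Let (T_n) and (F_n) be real sequences with F_n ≠ 0 and F_{n+1} = −T_{n+1} − 1/F_n for all n ≥ n₀, where T_n > 2 for n ≥ n₀ and T_n increases to T_∞ > 2. Let U_n = (−T_n + sqrt(T_n² − 4))/2 and U_∞ = (−T_∞ + sqrt(T_∞² − 4))/2. If U_{n+1} < F_n < U_∞ for all n ≥ n₀, then F_n → U_∞ as n → ∞. -/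
open Real Filter

theorem stmt_16 (n₀ : ℕ) (T : ℕ → ℝ) (Tinf : ℝ)
    (hT2 : ∀ n, n₀ ≤ n → 2 < T n)
    (hTmono : StrictMono T) (hTlim : Tendsto T atTop (nhds Tinf))
    (hTinf : 2 < Tinf)
    (U : ℕ → ℝ) (hU : ∀ n, U n = (-T n + Real.sqrt ((T n)^2 - 4)) / 2)
    (Uinf : ℝ) (hUinf : Uinf = (-Tinf + Real.sqrt (Tinf^2 - 4)) / 2)
    (F : ℕ → ℝ) (hFne : ∀ n, n₀ ≤ n → F n ≠ 0)
    (hFrec : ∀ n, n₀ ≤ n → F (n + 1) = -T (n + 1) - 1 / F n)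
    (hFbound : ∀ n, n₀ ≤ n → U (n + 1) < F n ∧ F n < Uinf) :
    Tendsto F atTop (nhds Uinf) := by
  have hUlim : Tendsto U atTop (nhds Uinf) := by
    have h1 : Tendsto (fun n => (-T n + Real.sqrt ((T n)^2 - 4)) / 2) atTop
        (nhds ((-Tinf + Real.sqrt (Tinf^2 - 4)) / 2)) := by
      apply Tendsto.div_const
      apply Tendsto.add hTlim.neg
      exact (Real.continuous_sqrt.tendsto _).comp ((hTlim.pow 2).sub_const 4)
    have : U = fun n => (-T n + Real.sqrt ((T n)^2 - 4)) / 2 := funext hU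
    rw [this, hUinf]
    exact h1
  have hUshift : Tendsto (fun n => U (n + 1)) atTop (nhds Uinf) :=
    hUlim.comp (tendsto_add_atTop_nat 1)
  refine tendsto_of_tendsto_of_tendsto_of_le_of_le' hUshift tendsto_const_nhds ?_ ?_
  · filter_upwards [eventually_ge_atTop n₀] with n hn
    exact (hFbound n hn).1.le
  · filter_upwards [eventually_ge_atTop n₀] with n hn
    exact (hFbound n hn).2.le
end
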